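/- Let ζ > 0 and let (λ², φ) be an eigenpair of the beam problem with eigenvalue written as λ². Then 4 λ² ∫₀¹ (φ(x))² dx ≤ ζ (φ‴(0))² ≤ 6 λ² ∫₀¹ (φ(x))² dx. -/

import Mathlib

open Set MeasureTheory intervalIntegral

/-- `Dv m f x` is the `m`-th derivative of `f` on the interval `[0,1]`. -/
noncomputable def Dv (m : ℕ) (f : ℝ → ℝ) (x : ℝ) : ℝ :=
  iteratedDerivWithin m f (Icc (0:ℝ) 1) x

/-- The beam boundary conditions. -/
def BeamBC (ζ : ℝ) (f : ℝ → ℝ) : Prop :=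
  f 0 = 0 ∧ Dv 1 f 0 = 0 ∧ Dv 2 f 0 = 0 ∧
  Dv 2 f 1 - ζ * Dv 4 f 1 = 0 ∧
  ζ * Dv 5 f 1 - Dv 3 f 1 = 0 ∧
  ζ * Dv 3 f 1 = 0

/-- An eigenpair `(μ, φ)` of the beam problem. -/
def BeamEigenpair (ζ μ : ℝ) (φ : ℝ → ℝ) : Prop :=
  ContDiffOn ℝ 6 φ (Icc (0:ℝ) 1) ∧ BeamBC ζ φ ∧
  (¬ ∀ x ∈ Icc (0:ℝ) 1, φ x = 0) ∧
  (∀ x ∈ Icc (0:ℝ) 1, Dv 4 φ x - ζ * Dv 6 φ x = μ * φ x)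

/-!
Two integral identities, both obtained by integrating the eigen-equation against a multiplier
and integrating by parts until the boundary conditions kill every boundary term:
multiplying by `φ` gives the energy identity `λ² ∫ φ² = ∫ φ''² + ζ ∫ φ'''²`, and multiplying by
the Rellich-type multiplier `(x - 1) φ'` gives `ζ φ'''(0)² = λ² ∫ φ² + 3 ∫ φ''² + 5 ζ ∫ φ'''²`.
Substituting the first into the second gives `ζ φ'''(0)² = 4 λ² ∫ φ² + 2 ζ ∫ φ'''²`
and `ζ φ'''(0)² = 6 λ² ∫ φ² - 2 ∫ φ''²`.
-/

theorem integral_eq_sub_of_hasDerivWithinAt_Icc {a b : ℝ} {g g' : ℝ → ℝ} (hab : a ≤ b)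
    (hg : ∀ x ∈ Icc a b, HasDerivWithinAt g (g' x) (Icc a b) x)
    (hg' : ContinuousOn g' (Icc a b)) :
    ∫ x in a..b, g' x = g b - g a := by
  refine integral_eq_sub_of_hasDeriv_right_of_le hab
    (fun x hx => (hg x hx).continuousWithinAt) (fun x hx => ?_)
    (hg'.intervalIntegrable_of_Icc hab)
  exact (hg x (Ioo_subset_Icc_self hx)).mono_of_mem_nhdsWithin
    (mem_nhdsWithin_of_mem_nhds (Icc_mem_nhds hx.1 hx.2))

theorem Dv_zero (f : ℝ → ℝ) : Dv 0 f = f :=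
  iteratedDerivWithin_zero

theorem ContDiffOn.hasDerivWithinAt_Dv {n : WithTop ℕ∞} {f : ℝ → ℝ}
    (hf : ContDiffOn ℝ n f (Icc 0 1)) {m : ℕ} (hm : (m : WithTop ℕ∞) < n) {x : ℝ}
    (hx : x ∈ Icc (0 : ℝ) 1) :
    HasDerivWithinAt (Dv m f) (Dv (m + 1) f x) (Icc 0 1) x := by
  rw [Dv, iteratedDerivWithin_succ]
  exact (hf.differentiableOn_iteratedDerivWithin hm (uniqueDiffOn_Icc zero_lt_one) x
    hx).hasDerivWithinAt

theorem ContDiffOn.continuousOn_Dv {n : WithTop ℕ∞} {f : ℝ → ℝ}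
    (hf : ContDiffOn ℝ n f (Icc 0 1)) {m : ℕ} (hm : (m : WithTop ℕ∞) ≤ n) :
    ContinuousOn (Dv m f) (Icc 0 1) :=
  hf.continuousOn_iteratedDerivWithin hm (uniqueDiffOn_Icc zero_lt_one)

theorem integral_quadratic_eq_sub {f G : ℝ → ℝ} (hf : ContDiffOn ℝ 3 f (Icc 0 1)) (a b c : ℝ)
    (hG : ∀ x ∈ Icc (0 : ℝ) 1, HasDerivWithinAt G
      (a * f x ^ 2 + b * Dv 2 f x ^ 2 + c * Dv 3 f x ^ 2) (Icc 0 1) x) :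
    a * (∫ x in (0 : ℝ)..1, f x ^ 2) + b * (∫ x in (0 : ℝ)..1, Dv 2 f x ^ 2)
      + c * (∫ x in (0 : ℝ)..1, Dv 3 f x ^ 2) = G 1 - G 0 := by
  have hc0 : ContinuousOn (fun x => f x ^ 2) (Icc 0 1) := hf.continuousOn.pow 2
  have hc2 : ContinuousOn (fun x => Dv 2 f x ^ 2) (Icc 0 1) :=
    (hf.continuousOn_Dv (by norm_num)).pow 2
  have hc3 : ContinuousOn (fun x => Dv 3 f x ^ 2) (Icc 0 1) :=
    (hf.continuousOn_Dv le_rfl).pow 2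
  have hi0 := (hc0.intervalIntegrable_of_Icc (μ := volume) zero_le_one).const_mul a
  have hi2 := (hc2.intervalIntegrable_of_Icc (μ := volume) zero_le_one).const_mul b
  have hi3 := (hc3.intervalIntegrable_of_Icc (μ := volume) zero_le_one).const_mul c
  rw [← integral_eq_sub_of_hasDerivWithinAt_Icc zero_le_one hG
      (((continuousOn_const.mul hc0).add (continuousOn_const.mul hc2)).add
        (continuousOn_const.mul hc3)),
    integral_add (hi0.add hi2) hi3, integral_add hi0 hi2, intervalIntegral.integral_const_mul,
    intervalIntegral.integral_const_mul, intervalIntegral.integral_const_mul]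

theorem BeamBC.Dv_three_one {ζ : ℝ} {f : ℝ → ℝ} (hζ : ζ ≠ 0) (h : BeamBC ζ f) :
    Dv 3 f 1 = 0 :=
  (mul_eq_zero.mp h.2.2.2.2.2).resolve_left hζ

theorem BeamBC.Dv_five_one {ζ : ℝ} {f : ℝ → ℝ} (hζ : ζ ≠ 0) (h : BeamBC ζ f) :
    Dv 5 f 1 = 0 := by
  have h5 := h.2.2.2.2.1
  rw [h.Dv_three_one hζ, sub_zero] at h5
  exact (mul_eq_zero.mp h5).resolve_left hζ

namespace BeamEigenpair

variable {ζ μ : ℝ} {φ : ℝ → ℝ}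

theorem energy_identity (hζ : ζ ≠ 0) (h : BeamEigenpair ζ μ φ) :
    μ * (∫ x in (0 : ℝ)..1, φ x ^ 2) =
      (∫ x in (0 : ℝ)..1, Dv 2 φ x ^ 2) + ζ * ∫ x in (0 : ℝ)..1, Dv 3 φ x ^ 2 := by
  have h31 := h.2.1.Dv_three_one hζ
  have h51 := h.2.1.Dv_five_one hζ
  obtain ⟨hφ, ⟨h00, h10, h20, h24, -, -⟩, -, heq⟩ := h
  let G : ℝ → ℝ := fun x => Dv 3 φ x * φ x - Dv 2 φ x * Dv 1 φ x -
    ζ * (Dv 5 φ x * φ x - Dv 4 φ x * Dv 1 φ x + Dv 3 φ x * Dv 2 φ x)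
  have hG : ∀ x ∈ Icc (0 : ℝ) 1, HasDerivWithinAt G
      (μ * φ x ^ 2 + (-1) * Dv 2 φ x ^ 2 + (-ζ) * Dv 3 φ x ^ 2) (Icc 0 1) x := by
    intro x hx
    have d0 := hφ.hasDerivWithinAt_Dv (m := 0) (by norm_num) hx
    rw [Dv_zero] at d0
    have d1 := hφ.hasDerivWithinAt_Dv (m := 1) (by norm_num) hx
    have d2 := hφ.hasDerivWithinAt_Dv (m := 2) (by norm_num) hx
    have d3 := hφ.hasDerivWithinAt_Dv (m := 3) (by norm_num) hx
    have d4 := hφ.hasDerivWithinAt_Dv (m := 4) (by norm_num) hx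
    have d5 := hφ.hasDerivWithinAt_Dv (m := 5) (by norm_num) hx
    refine (((d3.mul d0).sub (d2.mul d1)).sub
      ((((d5.mul d0).sub (d4.mul d1)).add (d3.mul d2)).const_mul ζ)).congr_deriv ?_
    linear_combination φ x * heq x hx
  have hG01 : G 1 - G 0 = 0 := by
    simp only [G]
    rw [h00, h10, h20, h31, h51]
    linear_combination (-Dv 1 φ 1) * h24
  have := integral_quadratic_eq_sub (hφ.of_le (by norm_num)) _ _ _ hG
  rw [hG01] at this
  linear_combination this

theorem rellich_identity (hζ : ζ ≠ 0) (h : BeamEigenpair ζ μ φ) :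
    ζ * Dv 3 φ 0 ^ 2 = μ * (∫ x in (0 : ℝ)..1, φ x ^ 2) +
      3 * (∫ x in (0 : ℝ)..1, Dv 2 φ x ^ 2) + 5 * ζ * ∫ x in (0 : ℝ)..1, Dv 3 φ x ^ 2 := by
  have h31 := h.2.1.Dv_three_one hζ
  have h51 := h.2.1.Dv_five_one hζ
  obtain ⟨hφ, ⟨h00, h10, h20, h24, -, -⟩, -, heq⟩ := h
  let G : ℝ → ℝ := fun x => μ * ((x - 1) * (φ x * φ x)) -
    ((x - 1) * Dv 1 φ x * Dv 3 φ x * 2 - Dv 1 φ x * Dv 2 φ x * 2 -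
      (x - 1) * (Dv 2 φ x * Dv 2 φ x)) +
    ζ * ((x - 1) * Dv 1 φ x * Dv 5 φ x * 2 - Dv 1 φ x * Dv 4 φ x * 2 -
      (x - 1) * Dv 2 φ x * Dv 4 φ x * 2 + Dv 2 φ x * Dv 3 φ x * 4 +
      (x - 1) * (Dv 3 φ x * Dv 3 φ x))
  have hG : ∀ x ∈ Icc (0 : ℝ) 1, HasDerivWithinAt G
      (μ * φ x ^ 2 + 3 * Dv 2 φ x ^ 2 + 5 * ζ * Dv 3 φ x ^ 2) (Icc 0 1) x := by
    intro x hx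
    have d0 := hφ.hasDerivWithinAt_Dv (m := 0) (by norm_num) hx
    rw [Dv_zero] at d0
    have d1 := hφ.hasDerivWithinAt_Dv (m := 1) (by norm_num) hx
    have d2 := hφ.hasDerivWithinAt_Dv (m := 2) (by norm_num) hx
    have d3 := hφ.hasDerivWithinAt_Dv (m := 3) (by norm_num) hx
    have d4 := hφ.hasDerivWithinAt_Dv (m := 4) (by norm_num) hx
    have d5 := hφ.hasDerivWithinAt_Dv (m := 5) (by norm_num) hx
    have dw : HasDerivWithinAt (fun y : ℝ => y - 1) 1 (Icc 0 1) x :=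
      (hasDerivWithinAt_id x _).sub_const 1
    refine ((((dw.mul (d0.mul d0)).const_mul μ).sub
        ((((dw.mul d1).mul d3).mul_const 2).sub ((d1.mul d2).mul_const 2) |>.sub
          (dw.mul (d2.mul d2)))).add
      (((((dw.mul d1).mul d5).mul_const 2).sub ((d1.mul d4).mul_const 2) |>.sub
          (((dw.mul d2).mul d4).mul_const 2) |>.add ((d2.mul d3).mul_const 4) |>.add
          (dw.mul (d3.mul d3))).const_mul ζ)).congr_deriv ?_
    simp only [Pi.mul_apply]
    linear_combination (-(2 * (x - 1) * Dv 1 φ x)) * heq x hx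
  have hG01 : G 1 - G 0 = ζ * Dv 3 φ 0 ^ 2 := by
    simp only [G]
    rw [h00, h10, h20, h31, h51]
    linear_combination (2 * Dv 1 φ 1) * h24
  rw [← hG01, ← integral_quadratic_eq_sub (hφ.of_le (by norm_num)) _ _ _ hG]

end BeamEigenpair

/-- For an eigenpair `(λ², φ)` of the beam problem,
`4 λ² ∫₀¹ φ² ≤ ζ (φ‴(0))² ≤ 6 λ² ∫₀¹ φ²`. -/
theorem stmt_12 (ζ : ℝ) (hζ : 0 < ζ) (lamsq : ℝ) (φ : ℝ → ℝ)
    (h : BeamEigenpair ζ lamsq φ) :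
    4 * lamsq * (∫ x in (0:ℝ)..1, (φ x)^2) ≤ ζ * (Dv 3 φ 0)^2 ∧
    ζ * (Dv 3 φ 0)^2 ≤ 6 * lamsq * ∫ x in (0:ℝ)..1, (φ x)^2 := by
  have energy := h.energy_identity hζ.ne'
  have rellich := h.rellich_identity hζ.ne'
  have h2 : 0 ≤ ∫ x in (0 : ℝ)..1, Dv 2 φ x ^ 2 :=
    integral_nonneg zero_le_one fun x _ => sq_nonneg _
  have h3 : 0 ≤ ζ * ∫ x in (0 : ℝ)..1, Dv 3 φ x ^ 2 :=
    mul_nonneg hζ.le (integral_nonneg zero_le_one fun x _ => sq_nonneg _)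
  constructor <;> linarith
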